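/- arXiv:2105.04032 — 3 statements merged into one kernel-verified Lean document; each statement's English description precedes it below -/
import Mathlib

section
/- For every integer n ≥ 13, the product of the first n primes (the primorial p_n#) satisfies p_n# ≥ n^n. -/
/-!
Induct on `n` from `n = 13`, where `p₁₃# = 304250263527210` only just exceeds
`13 ^ 13 = 302875106592253`. Since `(n + 1) ^ (n + 1) = (1 + 1/n) ^ n (n + 1) n ^ n < 3 (n + 1) n ^ n`,
the step needs only `p_{n+1} ≥ 3 (n + 1)`. That follows from `π x < x / 3` for `x ≥ 34`:
beyond small numbers, primes lie in the two residue classes modulo 6 coprime to 6.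
-/

open Finset
open scoped Nat.Prime

namespace Nat

theorem prod_range_count_nth {M : Type*} [CommMonoid M] (p : ℕ → Prop) [DecidablePred p]
    (f : ℕ → M) (m : ℕ) :
    ∏ j ∈ range (count p m), f (nth p j) = ∏ x ∈ range m with p x, f x := by
  induction m with
  | zero => simp
  | succ m ih =>
    rw [count_succ, range_add_one, filter_insert]
    by_cases hm : p m
    · simp only [hm, if_true, prod_range_succ, ih, nth_count hm]
      rw [prod_insert (by simp), mul_comm]
    · simpa [hm] using ih

theorem add_one_pow_le_three_mul_pow (n : ℕ) : (n + 1) ^ n ≤ 3 * n ^ n := by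
  rcases n.eq_zero_or_pos with rfl | hn
  · norm_num
  have h : ((n : ℝ) + 1) ^ n = (1 + (n : ℝ)⁻¹) ^ n * (n : ℝ) ^ n := by
    rw [← mul_pow, add_mul, inv_mul_cancel₀ (by positivity), one_mul, add_comm]
  have : ((n : ℝ) + 1) ^ n ≤ 3 * (n : ℝ) ^ n := by
    rw [h]
    gcongr
    exact Real.one_add_inv_pow_le_exp.trans (Real.exp_one_lt_d9.trans (by norm_num)).le
  exact_mod_cast this

theorem three_mul_primeCounting_lt {m : ℕ} (hm : 34 ≤ m) : 3 * π m < m := by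
  rcases lt_or_ge m 59 with hsmall | hlarge
  · interval_cases m <;> decide
  -- past 60, primes lie in the `φ 6 = 2` residue classes modulo 6 coprime to 6
  have h := primeCounting'_add_le (a := 6) (k := 60) (by norm_num) (by norm_num) (m + 1 - 60)
  rw [show 60 + (m + 1 - 60) = m + 1 by omega, show totient 6 = 2 by decide,
    show π' 60 = 17 by decide] at h
  rw [primeCounting]
  omega

theorem three_mul_add_one_le_nth_prime {n : ℕ} (hn : 11 ≤ n) : 3 * (n + 1) ≤ nth Prime n := by
  have h : π (3 * n + 2) ≤ n := by
    have := three_mul_primeCounting_lt (m := 3 * n + 2) (by omega)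
    omega
  exact (count_le_iff_le_nth infinite_setOfPred_prime).mp h

end Nat

/-- For every integer `n ≥ 13`, the primorial `p_n# = ∏_{j=1}^n p_j` (product of the
first `n` primes) satisfies `p_n# ≥ n ^ n`. Here `Nat.nth Nat.Prime j` is the
`j`-th prime in increasing order, zero-indexed. -/
theorem primorial_ge_pow (n : ℕ) (hn : 13 ≤ n) :
    n ^ n ≤ ∏ j ∈ Finset.range n, Nat.nth Nat.Prime j := by
  induction n, hn using Nat.le_induction with
  | base =>
    have h13 : Nat.count Nat.Prime 42 = 13 := by decide
    calc 13 ^ 13 ≤ ∏ x ∈ range 42 with x.Prime, x := by decide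
      _ = ∏ j ∈ range 13, Nat.nth Nat.Prime j := by
        rw [← h13]
        exact (Nat.prod_range_count_nth Nat.Prime id 42).symm
  | succ n hn ih =>
    calc (n + 1) ^ (n + 1) = (n + 1) ^ n * (n + 1) := pow_succ _ _
      _ ≤ 3 * n ^ n * (n + 1) := by gcongr; exact Nat.add_one_pow_le_three_mul_pow n
      _ = n ^ n * (3 * (n + 1)) := by ring
      _ ≤ (∏ j ∈ range n, Nat.nth Nat.Prime j) * Nat.nth Nat.Prime n :=
        Nat.mul_le_mul ih (Nat.three_mul_add_one_le_nth_prime (by omega))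
      _ = ∏ j ∈ range (n + 1), Nat.nth Nat.Prime j := (prod_range_succ _ _).symm
end

section
/- Fix A ≥ e^e and define f(x) = exp(x·(log A − log(x·log x))) for x ≥ 39. Then for all x in [39, A], f(x) ≤ exp(2·(1 + 1/log 39)·A/log A). -/
/-- For `A ≥ e^e` and `f(x) = exp(x·(log A − log(x·log x)))`, one has
`f(x) ≤ exp(2·(1 + 1/log 39)·A/log A)` for all `x ∈ [39, A]`. -/
theorem max_of_f_bound (A : ℝ) (hA : Real.exp (Real.exp 1) ≤ A) :
    ∀ x ∈ Set.Icc (39 : ℝ) A,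
      Real.exp (x * (Real.log A - Real.log (x * Real.log x))) ≤
        Real.exp (2 * (1 + 1 / Real.log 39) * A / Real.log A) := by
  intro x hx
  obtain ⟨hx39, hxA⟩ := hx
  have hexp1 : Real.exp 1 < 2.7182818286 := Real.exp_one_lt_d9
  have hexp1' : (0:ℝ) < Real.exp 1 := Real.exp_pos 1
  have hlog39 : (3:ℝ) ≤ Real.log 39 := by
    rw [Real.le_log_iff_exp_le (by norm_num)]
    calc Real.exp 3 = (Real.exp 1)^(3:ℕ) := by rw [← Real.exp_nat_mul]; norm_num
      _ ≤ 2.7182818286^(3:ℕ) := by gcongr <;> first | positivity | exact hexp1.le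
      _ ≤ 39 := by norm_num
  have hx0 : (0:ℝ) < x := by linarith
  have hlogx : (3:ℝ) ≤ Real.log x := by
    refine hlog39.trans (Real.log_le_log (by norm_num) hx39)
  have hu0 : (0:ℝ) < x * Real.log x := by nlinarith
  have hA0 : (0:ℝ) < A := lt_of_lt_of_le (Real.exp_pos _) hA
  have hLA : Real.exp 1 ≤ Real.log A := by
    rw [Real.le_log_iff_exp_le hA0]; exact hA
  have hLA0 : (0:ℝ) < Real.log A := lt_of_lt_of_le hexp1' hLA
  rw [Real.exp_le_exp]
  set L := Real.log A with hLdef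
  set v := Real.log (x * Real.log x) with hvdef
  have hRHS0 : 0 ≤ 2 * (1 + 1 / Real.log 39) * A / L := by
    have h39 : (0:ℝ) < 1 / Real.log 39 := by positivity
    positivity
  by_cases h : A ≤ x * Real.log x
  · have hLv : L ≤ v := Real.log_le_log hA0 h
    nlinarith
  · push_neg at h
    have hv4 : (4:ℝ) ≤ v := by
      rw [hvdef, Real.le_log_iff_exp_le hu0]
      calc Real.exp 4 = (Real.exp 1)^(4:ℕ) := by rw [← Real.exp_nat_mul]; norm_num
        _ ≤ 2.7182818286^(4:ℕ) := by gcongr <;> first | positivity | exact hexp1.le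
        _ ≤ 117 := by norm_num
        _ ≤ x * Real.log x := by nlinarith
    have hvL : v < L := Real.log_lt_log hu0 h
    set w := L - v with hwdef
    have hw0 : (0:ℝ) < w := by rw [hwdef]; linarith
    have hE : Real.exp v = x * Real.log x := Real.exp_log hu0
    have hW : Real.exp L = A := Real.exp_log hA0
    have hEW : A = Real.exp v * Real.exp w := by
      rw [← Real.exp_add, hwdef]; rw [show v + (L - v) = L by ring, hW]
    -- v ≤ 2 log x
    have hv2 : v ≤ 2 * Real.log x := by
      rw [hvdef, Real.log_mul (ne_of_gt hx0) (by linarith)]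
      have : Real.log (Real.log x) ≤ Real.log x :=
        Real.log_le_log (by linarith) (Real.log_le_self hx0.le)
      linarith
    clear_value w v L
    -- key inequality : L * w ≤ exp w * v
    have hkey : L * w ≤ Real.exp w * v := by
      have hq : (1 + w/2)^2 ≤ Real.exp w := by
        have h1 : 1 + w/2 ≤ Real.exp (w/2) := by linarith [Real.add_one_le_exp (w/2)]
        have h2 : Real.exp (w/2) * Real.exp (w/2) = Real.exp w := by
          rw [← Real.exp_add]; ring_nf
        nlinarith [h1, h2, hw0]
      nlinarith [mul_le_mul_of_nonneg_right hq (by positivity : (0:ℝ) ≤ v), hv4, hw0,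
        mul_nonneg (sub_nonneg.2 hv4) (sq_nonneg w)]
    -- main chain
    have hx2 : x * v ≤ 2 * Real.exp v := by rw [hE]; nlinarith
    have hmain : x * w ≤ 2 * A / L := by
      rw [le_div_iff₀ hLA0]
      have h3 : (x * v) * (L * w) ≤ (2 * Real.exp v) * (Real.exp w * v) :=
        mul_le_mul hx2 hkey (by positivity) (by positivity)
      nlinarith [h3, hv4, hEW]
    have hfin : 2 * A / L ≤ 2 * (1 + 1 / Real.log 39) * A / L := by
      have h39 : (0:ℝ) < 1 / Real.log 39 := by positivity
      refine (div_le_div_iff_of_pos_right hLA0).2 ?_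
      linarith [mul_pos h39 hA0]
    exact hmain.trans hfin
end

section
/- Suppose x_0 ≥ 39 satisfies log A = log(x_0 · log x_0) + 1 + 1/log x_0, where A ≥ e^e. Then x_0 ≤ 2·A/log A. -/
/-- If `A ≥ e^e` and `x₀ ≥ 39` satisfies `log A = log(x₀·log x₀) + 1 + 1/log x₀`,
then `x₀ ≤ 2A/log A`. -/
theorem critical_point_bound (A x₀ : ℝ) (hA : Real.exp (Real.exp 1) ≤ A)
    (hx : 39 ≤ x₀)
    (heq : Real.log A = Real.log (x₀ * Real.log x₀) + 1 + 1 / Real.log x₀) :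
    x₀ ≤ 2 * A / Real.log A := by
  have hx0 : (0:ℝ) < x₀ := by linarith
  have he : (2.7182818283:ℝ) < Real.exp 1 := Real.exp_one_gt_d9
  have he2 : Real.exp 1 < 2.7182818286 := Real.exp_one_lt_d9
  have hep := Real.exp_pos 1
  set L := Real.log x₀ with hLdef
  have hL3 : (3:ℝ) < L := by
    rw [hLdef, show (3:ℝ) = Real.log (Real.exp 3) by rw [Real.log_exp]]
    apply Real.log_lt_log (Real.exp_pos 3)
    have h3 : Real.exp 3 = (Real.exp 1)^3 := by
      rw [← Real.exp_nat_mul]; norm_num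
    have h4 : (Real.exp 1)^3 < 2.7182818286^3 := by
      gcongr
    nlinarith
  have hLpos : (0:ℝ) < L := by linarith
  have hA0 : (0:ℝ) < A := lt_of_lt_of_le (Real.exp_pos _) hA
  -- A = x₀ * L * exp(1 + 1/L)
  have hAeq : A = x₀ * L * Real.exp (1 + 1/L) := by
    have := congrArg Real.exp heq
    rw [Real.exp_log hA0] at this
    rw [this, show Real.log (x₀ * L) + 1 + 1/L = Real.log (x₀ * L) + (1 + 1/L) by ring,
      Real.exp_add, Real.exp_log (by positivity)]
  have hlogsplit : Real.log (x₀ * L) = L + Real.log L := by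
    rw [Real.log_mul (ne_of_gt hx0) (ne_of_gt hLpos)]
  have hlogA : Real.log A = L + Real.log L + 1 + 1/L := by
    rw [heq, hlogsplit]
  have hlogApos : (0:ℝ) < Real.log A := by
    have : Real.log L ≥ 0 := Real.log_nonneg (by linarith)
    rw [hlogA]; positivity
  rw [le_div_iff₀ hlogApos]
  -- goal : x₀ * log A ≤ 2 * A
  have hlogL : Real.log L ≤ L - 1 := Real.log_le_sub_one_of_pos hLpos
  have hinv : 1/L ≤ 1 := by
    rw [div_le_one hLpos]; linarith
  have hexp : Real.exp 1 ≤ Real.exp (1 + 1/L) := by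
    apply Real.exp_le_exp.mpr
    have : 0 < 1/L := by positivity
    linarith
  have key : L + Real.log L + 1 + 1/L ≤ 2 * L * Real.exp (1 + 1/L) := by
    nlinarith
  calc x₀ * Real.log A = x₀ * (L + Real.log L + 1 + 1/L) := by rw [hlogA]
    _ ≤ x₀ * (2 * L * Real.exp (1 + 1/L)) := by
        apply mul_le_mul_of_nonneg_left key (le_of_lt hx0)
    _ = 2 * A := by rw [hAeq]; ring
end
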